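/- Let (X, Y) be a bivariate Gaussian vector with means a, variances τ², and correlation ρ ∈ (−1, 1). Then for any u ∈ ℝ, cov(1{X ≥ u}, 1{Y ≥ u}) = (1/(2π)) ∫_0^ρ (1 − s²)^{−1/2} exp(−(u−a)²/(τ²(1+s))) ds. -/

import Mathlib

/-!
Standardise to `v = (u - a) / τ` and write the second coordinate as `ρ X₀ + √(1 - ρ²) Z`.
Conditioning on `X₀ = x`, the joint exceedance probability is
`J(ρ) = ∫_{x > v} φ(x) Q((v - ρ x) / √(1 - ρ²)) dx`, with `φ` the standard Gaussian density and
`Q` its tail. At `ρ = 0` this is `Q(v)²`, the product of the marginals (both coordinates are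
standard Gaussian). Differentiating under the integral sign and completing the square,
`J'(ρ) = (2π)⁻¹ (1 - ρ²)^(-1/2) exp(-v² / (1 + ρ))`; integrate from `0` to `ρ`.
-/

open MeasureTheory ProbabilityTheory Set Filter Real

noncomputable section

lemma gaussianPDFReal_zero_one (x : ℝ) :
    gaussianPDFReal 0 1 x = (√(2 * π))⁻¹ * exp (-x ^ 2 / 2) := by
  simp [gaussianPDFReal]

lemma gaussianPDFReal_zero_one_le (x : ℝ) : gaussianPDFReal 0 1 x ≤ (√(2 * π))⁻¹ := by
  rw [gaussianPDFReal_zero_one]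
  exact mul_le_of_le_one_right (by positivity) (exp_le_one_iff.2 (by nlinarith [sq_nonneg x]))

lemma continuous_gaussianPDFReal_zero_one : Continuous (gaussianPDFReal 0 1) := by
  simp_rw [funext gaussianPDFReal_zero_one]
  fun_prop

lemma integrable_abs_mul_gaussianPDFReal_zero_one :
    Integrable fun x => |x| * gaussianPDFReal 0 1 x := by
  refine ((integrable_mul_exp_neg_mul_sq (b := 1 / 2) (by norm_num)).abs.const_mul
    (√(2 * π))⁻¹).congr (.of_forall fun x => ?_)
  simp only [gaussianPDFReal_zero_one, abs_mul, abs_of_pos (exp_pos _)]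
  ring_nf

def stdGaussianTail (t : ℝ) : ℝ := ∫ x in Ioi t, gaussianPDFReal 0 1 x

lemma gaussianReal_Ici (t : ℝ) :
    gaussianReal 0 1 (Ici t) = ENNReal.ofReal (stdGaussianTail t) := by
  rw [gaussianReal_apply_eq_integral 0 one_ne_zero, integral_Ici_eq_integral_Ioi, stdGaussianTail]

lemma stdGaussianTail_nonneg (t : ℝ) : 0 ≤ stdGaussianTail t :=
  setIntegral_nonneg measurableSet_Ioi fun x _ => gaussianPDFReal_nonneg 0 1 x

lemma stdGaussianTail_le_one (t : ℝ) : stdGaussianTail t ≤ 1 := by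
  rw [← integral_gaussianPDFReal_eq_one 0 one_ne_zero]
  exact setIntegral_le_integral (integrable_gaussianPDFReal 0 1)
    (.of_forall (gaussianPDFReal_nonneg 0 1))

lemma hasDerivAt_stdGaussianTail (t : ℝ) :
    HasDerivAt stdGaussianTail (-gaussianPDFReal 0 1 t) t := by
  have hint (s : ℝ) := (integrable_gaussianPDFReal 0 1).integrableOn (s := Ioi s)
  have hprim : HasDerivAt (fun s => ∫ x in (0 : ℝ)..s, gaussianPDFReal 0 1 x)
      (gaussianPDFReal 0 1 t) t :=
    intervalIntegral.integral_hasDerivAt_right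
      (integrable_gaussianPDFReal 0 1).intervalIntegrable
      (continuous_gaussianPDFReal_zero_one.stronglyMeasurableAtFilter _ _)
      continuous_gaussianPDFReal_zero_one.continuousAt
  refine (hprim.const_sub (stdGaussianTail 0)).congr_of_eventuallyEq (.of_forall fun s => ?_)
  simp only [stdGaussianTail, ← intervalIntegral.integral_Ioi_sub_Ioi' (hint 0) (hint s),
    sub_sub_cancel]

lemma continuous_stdGaussianTail : Continuous stdGaussianTail :=
  continuous_iff_continuousAt.2 fun t => (hasDerivAt_stdGaussianTail t).continuousAt

lemma one_sub_sq_pos {r : ℝ} (hr : r ∈ Ioo (-1 : ℝ) 1) : 0 < 1 - r ^ 2 := by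
  nlinarith [hr.1, hr.2]

-- The second factor is the conditional probability of `{v ≤ r X₀ + √(1 - r²) Z}` given `X₀ = x`.
def exceedanceIntegrand (v r x : ℝ) : ℝ :=
  gaussianPDFReal 0 1 x * stdGaussianTail ((v - r * x) / √(1 - r ^ 2))

def exceedanceIntegrandDeriv (v r x : ℝ) : ℝ :=
  gaussianPDFReal 0 1 x * gaussianPDFReal 0 1 ((v - r * x) / √(1 - r ^ 2)) *
    ((x - r * v) / √(1 - r ^ 2) ^ 3)

lemma hasDerivAt_sub_mul_div_sqrt_one_sub_sq (v x : ℝ) {r : ℝ} (hr : r ∈ Ioo (-1 : ℝ) 1) :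
    HasDerivAt (fun r => (v - r * x) / √(1 - r ^ 2)) ((r * v - x) / √(1 - r ^ 2) ^ 3) r := by
  have hpos := one_sub_sq_pos hr
  have hsqrt : HasDerivAt (fun r : ℝ => √(1 - r ^ 2)) (-(2 * r) / (2 * √(1 - r ^ 2))) r := by
    simpa using ((hasDerivAt_pow 2 r).const_sub 1).sqrt hpos.ne'
  refine (((hasDerivAt_mul_const x).const_sub v).div hsqrt (sqrt_pos.2 hpos).ne').congr_deriv ?_
  have hsq : √(1 - r ^ 2) ^ 2 = 1 - r ^ 2 := sq_sqrt hpos.le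
  field_simp
  linear_combination (-x) * hsq

lemma hasDerivAt_exceedanceIntegrand (v x : ℝ) {r : ℝ} (hr : r ∈ Ioo (-1 : ℝ) 1) :
    HasDerivAt (fun r => exceedanceIntegrand v r x) (exceedanceIntegrandDeriv v r x) r := by
  refine (((hasDerivAt_stdGaussianTail _).comp r
    (hasDerivAt_sub_mul_div_sqrt_one_sub_sq v x hr)).const_mul _).congr_deriv ?_
  rw [exceedanceIntegrandDeriv]
  ring

lemma continuous_exceedanceIntegrand (v r : ℝ) : Continuous (exceedanceIntegrand v r) :=
  continuous_gaussianPDFReal_zero_one.mul (continuous_stdGaussianTail.comp (by fun_prop))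

lemma continuous_exceedanceIntegrandDeriv (v r : ℝ) : Continuous (exceedanceIntegrandDeriv v r) :=
  (continuous_gaussianPDFReal_zero_one.mul
    (continuous_gaussianPDFReal_zero_one.comp (by fun_prop))).mul (by fun_prop)

lemma exceedanceIntegrand_nonneg (v r x : ℝ) : 0 ≤ exceedanceIntegrand v r x :=
  mul_nonneg (gaussianPDFReal_nonneg 0 1 x) (stdGaussianTail_nonneg _)

lemma integrable_exceedanceIntegrand (v r : ℝ) : Integrable (exceedanceIntegrand v r) := by
  refine (integrable_gaussianPDFReal 0 1).mono
    (continuous_exceedanceIntegrand v r).aestronglyMeasurable (.of_forall fun x => ?_)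
  rw [norm_of_nonneg (exceedanceIntegrand_nonneg v r x),
    norm_of_nonneg (gaussianPDFReal_nonneg 0 1 x)]
  exact mul_le_of_le_one_right (gaussianPDFReal_nonneg 0 1 x) (stdGaussianTail_le_one _)

lemma abs_exceedanceIntegrandDeriv_le (v x : ℝ) {r δ : ℝ} (hr : r ∈ Ioo (-1 : ℝ) 1) (hδ : 0 < δ)
    (hδr : δ ≤ 1 - r ^ 2) :
    |exceedanceIntegrandDeriv v r x| ≤
      (√(2 * π))⁻¹ / √δ ^ 3 * ((|x| + |v|) * gaussianPDFReal 0 1 x) := by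
  have hnum : |x - r * v| ≤ |x| + |v| := by
    have : |r| ≤ 1 := abs_le.2 ⟨hr.1.le, hr.2.le⟩
    calc |x - r * v| ≤ |x| + |r| * |v| := by rw [← abs_mul]; exact abs_sub _ _
      _ ≤ |x| + |v| := by nlinarith [abs_nonneg v]
  have hden : √δ ^ 3 ≤ √(1 - r ^ 2) ^ 3 := by gcongr
  rw [exceedanceIntegrandDeriv, abs_mul, abs_mul, abs_div,
    abs_of_nonneg (gaussianPDFReal_nonneg _ _ _), abs_of_nonneg (gaussianPDFReal_nonneg _ _ _),
    abs_of_nonneg (by positivity : 0 ≤ √(1 - r ^ 2) ^ 3)]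
  calc gaussianPDFReal 0 1 x * gaussianPDFReal 0 1 ((v - r * x) / √(1 - r ^ 2)) *
        (|x - r * v| / √(1 - r ^ 2) ^ 3)
      ≤ gaussianPDFReal 0 1 x * (√(2 * π))⁻¹ * ((|x| + |v|) / √δ ^ 3) := by
        have := gaussianPDFReal_nonneg 0 1 x
        gcongr
        exact gaussianPDFReal_zero_one_le _
    _ = _ := by ring

lemma integrable_add_abs_mul_gaussianPDFReal_zero_one (v : ℝ) :
    Integrable fun x => (|x| + |v|) * gaussianPDFReal 0 1 x := by
  simp_rw [add_mul]
  exact integrable_abs_mul_gaussianPDFReal_zero_one.add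
    ((integrable_gaussianPDFReal 0 1).const_mul |v|)

lemma hasDerivAt_setIntegral_exceedanceIntegrand (v : ℝ) (s : Set ℝ) {r₀ : ℝ}
    (hr₀ : r₀ ∈ Ioo (-1 : ℝ) 1) :
    HasDerivAt (fun r => ∫ x in s, exceedanceIntegrand v r x)
      (∫ x in s, exceedanceIntegrandDeriv v r₀ x) r₀ := by
  set ε := (1 - |r₀|) / 2
  have hε : 0 < ε := by have := abs_lt.2 ⟨hr₀.1, hr₀.2⟩; simp only [ε]; linarith
  -- on this ball `1 - r²` stays above `ε`, which gives a uniform bound on the derivative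
  have hball : ∀ r ∈ Metric.ball r₀ ε, r ∈ Ioo (-1 : ℝ) 1 ∧ ε ≤ 1 - r ^ 2 := by
    intro r hr
    rw [Metric.mem_ball, dist_eq] at hr
    have hr' : |r| < 1 - ε := by
      have := abs_sub_abs_le_abs_sub r r₀; simp only [ε] at hr ⊢; linarith
    refine ⟨abs_lt.1 (by linarith), ?_⟩
    nlinarith [abs_nonneg r, sq_abs r]
  exact (hasDerivAt_integral_of_dominated_loc_of_deriv_le (Metric.ball_mem_nhds r₀ hε)
    (.of_forall fun r => (continuous_exceedanceIntegrand v r).aestronglyMeasurable)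
    (integrable_exceedanceIntegrand v r₀).integrableOn
    (continuous_exceedanceIntegrandDeriv v r₀).aestronglyMeasurable
    (.of_forall fun x r hr => abs_exceedanceIntegrandDeriv_le v x (hball r hr).1 hε (hball r hr).2)
    ((integrable_add_abs_mul_gaussianPDFReal_zero_one v).const_mul _).integrableOn
    (.of_forall fun x r hr => hasDerivAt_exceedanceIntegrand v x (hball r hr).1)).2

lemma integral_Ioi_sub_mul_exp_neg_sq_div {c : ℝ} (hc : 0 < c) (a b : ℝ) :
    ∫ x in Ioi a, (x - b) * exp (-(x - b) ^ 2 / (2 * c)) = c * exp (-(a - b) ^ 2 / (2 * c)) := by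
  have hderiv (x : ℝ) : HasDerivAt (fun x => -c * exp (-(x - b) ^ 2 / (2 * c)))
      ((x - b) * exp (-(x - b) ^ 2 / (2 * c))) x := by
    have hexponent : HasDerivAt (fun x : ℝ => -(x - b) ^ 2 / (2 * c)) (-(x - b) / c) x := by
      refine ((((hasDerivAt_id' x).sub_const b).fun_pow 2).fun_neg.div_const _).congr_deriv ?_
      field_simp
      ring
    refine (hexponent.exp.const_mul _).congr_deriv ?_
    field_simp
  have hint : Integrable fun x => (x - b) * exp (-(x - b) ^ 2 / (2 * c)) := by
    refine ((integrable_mul_exp_neg_mul_sq (inv_pos.2 (mul_pos two_pos hc))).comp_sub_right b).congr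
      (.of_forall fun x => ?_)
    simp only [div_eq_inv_mul, neg_mul, mul_neg]
  have hlim : Tendsto (fun x => -c * exp (-(x - b) ^ 2 / (2 * c))) atTop (nhds 0) := by
    have hsq : Tendsto (fun x : ℝ => (x - b) ^ 2) atTop atTop :=
      (tendsto_pow_atTop two_ne_zero).comp (tendsto_atTop_add_const_right _ (-b) tendsto_id)
    simpa using ((tendsto_exp_atBot.comp ((tendsto_neg_atTop_atBot.comp hsq).atBot_div_const
      (mul_pos two_pos hc))).const_mul (-c))
  rw [integral_Ioi_of_hasDerivAt_of_tendsto (hderiv a).continuousAt.continuousWithinAt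
    (fun x _ => hderiv x) hint.integrableOn hlim]
  ring

lemma exceedanceIntegrandDeriv_eq (v x : ℝ) {r : ℝ} (hr : r ∈ Ioo (-1 : ℝ) 1) :
    exceedanceIntegrandDeriv v r x = (2 * π)⁻¹ * exp (-v ^ 2 / 2) / √(1 - r ^ 2) ^ 3 *
      ((x - r * v) * exp (-(x - r * v) ^ 2 / (2 * (1 - r ^ 2)))) := by
  have hpos := one_sub_sq_pos hr
  -- completing the square: `x² + (v - r x)² / (1 - r²) = v² + (x - r v)² / (1 - r²)`
  have hexp : exp (-x ^ 2 / 2) * exp (-((v - r * x) / √(1 - r ^ 2)) ^ 2 / 2) =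
      exp (-v ^ 2 / 2) * exp (-(x - r * v) ^ 2 / (2 * (1 - r ^ 2))) := by
    rw [← exp_add, ← exp_add, div_pow, sq_sqrt hpos.le]
    congr 1
    field_simp
    ring
  have hπ : √(2 * π) * √(2 * π) = 2 * π := mul_self_sqrt (by positivity)
  rw [exceedanceIntegrandDeriv, gaussianPDFReal_zero_one, gaussianPDFReal_zero_one]
  calc (√(2 * π))⁻¹ * exp (-x ^ 2 / 2) * ((√(2 * π))⁻¹ *
        exp (-((v - r * x) / √(1 - r ^ 2)) ^ 2 / 2)) * ((x - r * v) / √(1 - r ^ 2) ^ 3)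
      = (√(2 * π) * √(2 * π))⁻¹ * (exp (-x ^ 2 / 2) *
          exp (-((v - r * x) / √(1 - r ^ 2)) ^ 2 / 2)) * ((x - r * v) / √(1 - r ^ 2) ^ 3) := by
        ring
    _ = _ := by rw [hexp, hπ]; ring

lemma setIntegral_Ioi_exceedanceIntegrandDeriv (v : ℝ) {r : ℝ} (hr : r ∈ Ioo (-1 : ℝ) 1) :
    ∫ x in Ioi v, exceedanceIntegrandDeriv v r x =
      (2 * π)⁻¹ * ((1 - r ^ 2) ^ (-(1 : ℝ) / 2) * exp (-v ^ 2 / (1 + r))) := by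
  have hpos := one_sub_sq_pos hr
  have h1r : 0 < 1 + r := by linarith [hr.1]
  simp_rw [exceedanceIntegrandDeriv_eq v _ hr]
  have hrpow : (1 - r ^ 2) ^ (-(1 : ℝ) / 2) = (√(1 - r ^ 2))⁻¹ := by
    rw [neg_div, rpow_neg hpos.le, sqrt_eq_rpow]
  rw [integral_const_mul, integral_Ioi_sub_mul_exp_neg_sq_div hpos, hrpow]
  have hsq : √(1 - r ^ 2) ^ 2 = 1 - r ^ 2 := sq_sqrt hpos.le
  have hexp : exp (-v ^ 2 / 2) * exp (-(v - r * v) ^ 2 / (2 * (1 - r ^ 2))) =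
      exp (-v ^ 2 / (1 + r)) := by
    rw [← exp_add]
    congr 1
    field_simp
    ring
  have hcube : √(1 - r ^ 2) ^ 3 = (1 - r ^ 2) * √(1 - r ^ 2) := by rw [pow_succ, hsq, mul_comm]
  rw [← hexp, hcube]
  have := sqrt_pos.2 hpos
  field_simp

lemma setIntegral_Ioi_exceedanceIntegrand_zero (v : ℝ) :
    ∫ x in Ioi v, exceedanceIntegrand v 0 x = stdGaussianTail v ^ 2 := by
  simp only [exceedanceIntegrand, zero_mul, sub_zero, zero_pow two_ne_zero, sqrt_one, div_one]
  rw [integral_mul_const, sq]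
  rfl

lemma setIntegral_Ioi_exceedanceIntegrand_sub_tail_sq (v : ℝ) {ρ : ℝ} (hρ : ρ ∈ Ioo (-1 : ℝ) 1) :
    (∫ x in Ioi v, exceedanceIntegrand v ρ x) - stdGaussianTail v ^ 2 =
      (2 * π)⁻¹ * ∫ s in (0 : ℝ)..ρ, (1 - s ^ 2) ^ (-(1 : ℝ) / 2) * exp (-v ^ 2 / (1 + s)) := by
  have hsub : uIcc 0 ρ ⊆ Ioo (-1 : ℝ) 1 :=
    ordConnected_Ioo.uIcc_subset ⟨by norm_num, by norm_num⟩ hρ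
  have hcont : ContinuousOn
      (fun s : ℝ => (2 * π)⁻¹ * ((1 - s ^ 2) ^ (-(1 : ℝ) / 2) * exp (-v ^ 2 / (1 + s))))
      (uIcc 0 ρ) := by
    intro s hs
    have hs1 := one_sub_sq_pos (hsub hs)
    have hs2 : 1 + s ≠ 0 := by linarith [(hsub hs).1]
    exact ContinuousAt.continuousWithinAt
      (by fun_prop (disch := first | exact hs2 | exact Or.inl hs1.ne'))
  rw [← setIntegral_Ioi_exceedanceIntegrand_zero, ← intervalIntegral.integral_const_mul]
  refine (intervalIntegral.integral_eq_sub_of_hasDerivAt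
    (f := fun r => ∫ x in Ioi v, exceedanceIntegrand v r x) (fun s hs => ?_)
    hcont.intervalIntegrable).symm
  rw [← setIntegral_Ioi_exceedanceIntegrandDeriv v (hsub hs)]
  exact hasDerivAt_setIntegral_exceedanceIntegrand v _ (hsub hs)

def exceedanceSet (v r : ℝ) : Set (ℝ × ℝ) :=
  {p | v ≤ p.1 ∧ v ≤ r * p.1 + √(1 - r ^ 2) * p.2}

lemma measurableSet_exceedanceSet (v r : ℝ) : MeasurableSet (exceedanceSet v r) :=
  (measurableSet_le measurable_const measurable_fst).inter
    (measurableSet_le measurable_const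
      ((measurable_fst.const_mul r).add (measurable_snd.const_mul _)))

lemma prod_gaussianReal_exceedanceSet (v : ℝ) {r : ℝ} (hr : r ∈ Ioo (-1 : ℝ) 1) :
    (gaussianReal 0 1).prod (gaussianReal 0 1) (exceedanceSet v r) =
      ENNReal.ofReal (∫ x in Ioi v, exceedanceIntegrand v r x) := by
  have hc : 0 < √(1 - r ^ 2) := sqrt_pos.2 (one_sub_sq_pos hr)
  have hsection (x : ℝ) : gaussianReal 0 1 (Prod.mk x ⁻¹' exceedanceSet v r) =
      (Ici v).indicator
        (fun x => ENNReal.ofReal (stdGaussianTail ((v - r * x) / √(1 - r ^ 2)))) x := by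
    by_cases hx : v ≤ x
    · rw [indicator_of_mem (mem_Ici.2 hx), ← gaussianReal_Ici]
      congr 1
      ext y
      simp only [exceedanceSet, mem_preimage, mem_ofPred_eq, mem_Ici, hx, true_and,
        div_le_iff₀ hc]
      constructor <;> intro <;> linarith
    · rw [indicator_of_notMem (notMem_Ici.2 (not_le.1 hx)),
        ← measure_empty (μ := gaussianReal 0 1)]
      congr 1
      ext y
      simp [exceedanceSet, hx]
  have hmeas : Measurable fun x => ENNReal.ofReal (stdGaussianTail ((v - r * x) / √(1 - r ^ 2))) :=
    (continuous_stdGaussianTail.comp (by fun_prop)).measurable.ennreal_ofReal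
  rw [Measure.prod_apply (measurableSet_exceedanceSet v r), lintegral_congr hsection,
    lintegral_indicator measurableSet_Ici, gaussianReal_of_var_ne_zero 0 one_ne_zero,
    setLIntegral_withDensity_eq_setLIntegral_mul _ (measurable_gaussianPDF 0 1) hmeas
      measurableSet_Ici, ← integral_Ici_eq_integral_Ioi,
    ofReal_integral_eq_lintegral_ofReal (integrable_exceedanceIntegrand v r).integrableOn
      (.of_forall (exceedanceIntegrand_nonneg v r))]
  simp only [Pi.mul_apply, gaussianPDF, exceedanceIntegrand,
    ENNReal.ofReal_mul (gaussianPDFReal_nonneg 0 1 _)]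

lemma map_mul_add_mul_eq_gaussianReal {Ω : Type*} [MeasurableSpace Ω] {P : Measure Ω}
    {X Z : Ω → ℝ} (hXm : Measurable X) (hZm : Measurable Z)
    (hX : P.map X = gaussianReal 0 1) (hZ : P.map Z = gaussianReal 0 1) (hXZ : IndepFun X Z P)
    {a b : ℝ} (hab : a ^ 2 + b ^ 2 = 1) :
    P.map (fun ω => a * X ω + b * Z ω) = gaussianReal 0 1 := by
  have hscale {c : ℝ} {Y : Ω → ℝ} (hYm : Measurable Y) (hY : P.map Y = gaussianReal 0 1) :
      P.map ((c * ·) ∘ Y) = gaussianReal 0 (.mk (c ^ 2) (sq_nonneg c)) := by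
    rw [← Measure.map_map (measurable_const_mul c) hYm, hY, gaussianReal_map_const_mul]
    simp
  have hsum := gaussianReal_add_gaussianReal_of_indepFun
    (hXZ.comp (measurable_const_mul a) (measurable_const_mul b)) (hscale hXm hX) (hscale hZm hZ)
  have hvar : (1 : NNReal) = .mk (a ^ 2) (sq_nonneg a) + .mk (b ^ 2) (sq_nonneg b) :=
    NNReal.eq (by simp [hab])
  rw [add_zero, ← hvar] at hsum
  exact hsum

lemma measure_setOf_le_eq_ofReal_stdGaussianTail {Ω : Type*} [MeasurableSpace Ω] {P : Measure Ω}
    {Y : Ω → ℝ} (hYm : Measurable Y) (hY : P.map Y = gaussianReal 0 1) (v : ℝ) :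
    P {ω | v ≤ Y ω} = ENNReal.ofReal (stdGaussianTail v) := by
  rw [← gaussianReal_Ici, ← hY, Measure.map_apply hYm measurableSet_Ici]
  rfl

end

/-- for a bivariate Gaussian vector with means `a`, variances `τ²` and
correlation `ρ ∈ (−1,1)` — realized as `X = a + τX₀`, `Y = a + τ(ρX₀ + √(1−ρ²)Z)` with
`X₀, Z` independent standard Gaussians — one has, for every level `u`,
`cov(1{X ≥ u}, 1{Y ≥ u}) = (1/(2π)) ∫_0^ρ (1−s²)^{−1/2} exp(−(u−a)²/(τ²(1+s))) ds`. -/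
theorem gaussian_indicator_cov_formula
    {Ω : Type*} [MeasurableSpace Ω] (P : Measure Ω) [IsProbabilityMeasure P]
    (X₀ Z : Ω → ℝ) (hX₀m : Measurable X₀) (hZm : Measurable Z)
    (hX₀ : Measure.map X₀ P = gaussianReal 0 1) (hZ : Measure.map Z P = gaussianReal 0 1)
    (hind : IndepFun X₀ Z P) (ρ : ℝ) (hρ : ρ ∈ Set.Ioo (-1 : ℝ) 1)
    (a τ : ℝ) (hτ : 0 < τ) (X Y : Ω → ℝ)
    (hX : X = fun ω => a + τ * X₀ ω)
    (hY : Y = fun ω => a + τ * (ρ * X₀ ω + Real.sqrt (1 - ρ ^ 2) * Z ω))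
    (u : ℝ) :
    (P {ω | u ≤ X ω ∧ u ≤ Y ω}).toReal
        - (P {ω | u ≤ X ω}).toReal * (P {ω | u ≤ Y ω}).toReal
      = (1 / (2 * Real.pi)) *
          ∫ s in (0 : ℝ)..ρ,
            (1 - s ^ 2) ^ (-(1 : ℝ) / 2) * Real.exp (-(u - a) ^ 2 / (τ ^ 2 * (1 + s))) := by
  subst hX hY
  set v := (u - a) / τ
  have hlevel (w : ℝ) : u ≤ a + τ * w ↔ v ≤ w := by
    rw [div_le_iff₀ hτ]
    constructor <;> intro <;> linarith
  have hpair : P.map (fun ω => (X₀ ω, Z ω)) = (gaussianReal 0 1).prod (gaussianReal 0 1) := by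
    simpa only [hX₀, hZ] using
      (indepFun_iff_map_prod_eq_prod_map_map hX₀m.aemeasurable hZm.aemeasurable).1 hind
  have hjoint : P {ω | v ≤ X₀ ω ∧ v ≤ ρ * X₀ ω + √(1 - ρ ^ 2) * Z ω} =
      ENNReal.ofReal (∫ x in Ioi v, exceedanceIntegrand v ρ x) := by
    rw [← prod_gaussianReal_exceedanceSet v hρ, ← hpair,
      Measure.map_apply (hX₀m.prodMk hZm) (measurableSet_exceedanceSet v ρ)]
    rfl
  have hW : P.map (fun ω => ρ * X₀ ω + √(1 - ρ ^ 2) * Z ω) = gaussianReal 0 1 :=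
    map_mul_add_mul_eq_gaussianReal hX₀m hZm hX₀ hZ hind
      (by rw [sq_sqrt (one_sub_sq_pos hρ).le]; ring)
  have hexponent (s : ℝ) : -(u - a) ^ 2 / (τ ^ 2 * (1 + s)) = -v ^ 2 / (1 + s) := by
    rw [div_pow, neg_div, neg_div, div_div]
  simp only [hlevel, hexponent]
  rw [hjoint, measure_setOf_le_eq_ofReal_stdGaussianTail hX₀m hX₀,
    measure_setOf_le_eq_ofReal_stdGaussianTail (by fun_prop) hW,
    ENNReal.toReal_ofReal (setIntegral_nonneg measurableSet_Ioi
      fun x _ => exceedanceIntegrand_nonneg v ρ x),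
    ENNReal.toReal_ofReal (stdGaussianTail_nonneg v), ← sq,
    setIntegral_Ioi_exceedanceIntegrand_sub_tail_sq v hρ, one_div]
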